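/- arXiv:2303.17320 — 3 statements merged into one kernel-verified Lean document; each statement's English description precedes it below -/
import Mathlib

section
/- Let (X, 𝔅, μ, T) be an ergodic measure-preserving dynamical system, let A, E ∈ 𝔅 with μ(A) > 0, and let E'_A = ⋃_{k≥0} (A ∩ {r_A > k} ∩ T^{−k}(E)) be the shadow of E in A. Then μ(E'_A) = μ(E ∩ {r_A ≤ r_E}); moreover, up to a μ-null set, E'_A equals the pairwise disjoint union ⋃_{k≥0} (A ∩ {r_A > k} ∩ T^{−k}(E ∩ {r_A ≤ r_E})). -/
open MeasureTheory Filter Set ProbabilityTheory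
open scoped ENNReal Topology ENat

noncomputable section

variable {X : Type*}

/-- The instant of the `i`-th visit (after time `0`) of the orbit of `x` under `T` to `B`,
with the convention that `hitInstant T B x 0 = 0` and the value is `⊤` if there is no
such visit. -/
def hitInstant (T : X → X) (B : Set X) (x : X) : ℕ → ℕ∞
  | 0 => 0
  | (i+1) => sInf {m : ℕ∞ | ∃ n : ℕ, hitInstant T B x i < (n : ℕ∞) ∧ T^[n] x ∈ B ∧ m = (n : ℕ∞)}

/-- The first hitting time `r_B(x) = inf {k ≥ 1 : T^k x ∈ B}` (with value `⊤` if the orbit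
never enters `B`). -/
def hitTime (T : X → X) (B : Set X) (x : X) : ℕ∞ := hitInstant T B x 1

/-- The `i`-th interarrival time (gap between the `i`-th and `(i+1)`-st visits);
`interGap T B 0 x` is the first hitting time `r_B^{(1)}(x)`, and once some
visit fails to occur, all subsequent gaps are `⊤`. -/
def interGap (T : X → X) (B : Set X) (i : ℕ) (x : X) : ℝ≥0∞ :=
  if hitInstant T B x i = ⊤ then ⊤
  else ((hitInstant T B x (i+1) - hitInstant T B x i : ℕ∞) : ℝ≥0∞)

/-- The shadow set `E'_A = ⋃_{k ≥ 0} (A ∩ {r_A > k} ∩ T^{-k} E)` of `E` in `A`. -/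
def shadow (T : X → X) (A E : Set X) : Set X :=
  ⋃ k : ℕ, A ∩ {x | (k : ℕ∞) < hitTime T A x} ∩ (T^[k]) ⁻¹' E

/-- The induced (first-return) map `T_A(x) = T^{r_A(x)}(x)` (junk value `x` if the orbit of
`x` never returns to `A`). -/
def inducedMap (T : X → X) (A : Set X) (x : X) : X :=
  T^[sInf {n : ℕ | 1 ≤ n ∧ T^[n] x ∈ A}] x

/-- The rescaled interarrival process `c · Φ_B : x ↦ (c · r_B^{(i)}(x))_{i ≥ 1}`,
as a random element of `ℕ → ℝ≥0∞`. -/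
def rescaledProcess (T : X → X) (B : Set X) (c : ℝ≥0∞) (x : X) : ℕ → ℝ≥0∞ :=
  fun i => c * interGap T B i x

/-- Convergence in distribution: the laws of the random elements `f n : X → (ℕ → ℝ≥0∞)`
under the measures `P n` converge weakly to `ν` (tested against bounded continuous
real functions, with `ℕ → ℝ≥0∞` carrying the product topology). -/
def ConvInDist [MeasurableSpace X] (P : ℕ → Measure X)
    (f : ℕ → X → (ℕ → ℝ≥0∞)) (ν : Measure (ℕ → ℝ≥0∞)) : Prop :=
  ∀ g : BoundedContinuousFunction (ℕ → ℝ≥0∞) ℝ,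
    Tendsto (fun n => ∫ x, g (f n x) ∂(P n)) atTop (𝓝 (∫ y, g y ∂ν))

end

/-!
Write `D_k(F) = A ∩ {r_A > k} ∩ T^{-k} F` for the levels of the shadow of `F`. Splitting
`T⁻¹({r_A > k} ∩ T^{-k} F)` according to whether `T x ∈ A` and using invariance of `μ` gives
`μ F = ∑_{k<n} μ(D_k(F)) + μ({r_A > n} ∩ T^{-n} F)`; by ergodicity `r_A < ∞` a.e., so
`∑_k μ(D_k(F)) = μ F`. For `F = E ∩ {r_A ≤ r_E}` the levels are disjoint, since a point of two
levels `k < j` would visit `A` between the times `k` and `j`. Finally, a point of `E'_A` that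
returns to `A` at time `N` lies in `D_j(F)` for the last time `j < N` at which it visits `E`.
-/

open Function

section HitTime

variable {X : Type*} {T : X → X} {A B C E : Set X} {x : X}

lemma hitTime_eq_sInf (T : X → X) (B : Set X) (x : X) :
    hitTime T B x = sInf ((↑) '' {n : ℕ | 0 < n ∧ T^[n] x ∈ B}) := by
  simp only [hitTime, hitInstant]
  congr 1
  ext m
  simp [eq_comm, and_assoc]

lemma lt_hitTime_iff {k : ℕ} :
    (k : ℕ∞) < hitTime T B x ↔ ∀ n : ℕ, 0 < n → n ≤ k → T^[n] x ∉ B := by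
  rw [hitTime_eq_sInf, ← ENat.add_one_le_iff (ENat.natCast_ne_top k), le_sInf_iff]
  simp only [mem_image, mem_ofPred_eq, forall_exists_index, and_imp]
  refine ⟨fun h n hn hnk hB => ?_, fun h m n hn hB hm => ?_⟩
  · have := h n n hn hB rfl
    norm_cast at this
    omega
  · subst hm
    have : ¬ n ≤ k := fun hnk => h n hn hnk hB
    exact_mod_cast (show k + 1 ≤ n by omega)

lemma hitTime_le_iff {n : ℕ} :
    hitTime T B x ≤ n ↔ ∃ m : ℕ, 0 < m ∧ m ≤ n ∧ T^[m] x ∈ B := by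
  rw [← not_lt, lt_hitTime_iff]
  push Not
  rfl

lemma hitTime_le_of_mem {n : ℕ} (hn : 0 < n) (h : T^[n] x ∈ B) : hitTime T B x ≤ n :=
  hitTime_le_iff.2 ⟨n, hn, le_rfl, h⟩

lemma hitTime_pos : 0 < hitTime T B x := by
  exact_mod_cast (lt_hitTime_iff (k := 0)).2 fun n hn hn0 => absurd hn (by omega)

lemma iterate_hitTime_mem {n : ℕ} (h : hitTime T B x = n) : T^[n] x ∈ B := by
  obtain ⟨m, hm, hmn, hB⟩ := hitTime_le_iff.1 h.le
  obtain rfl : m = n := le_antisymm hmn (by exact_mod_cast h ▸ hitTime_le_of_mem hm hB)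
  exact hB

lemma hitTime_anti (h : B ⊆ C) : hitTime T C x ≤ hitTime T B x := by
  simp only [hitTime_eq_sInf]
  exact sInf_le_sInf (image_mono fun n hn => ⟨hn.1, h hn.2⟩)

lemma succ_lt_hitTime_iff {k : ℕ} :
    ((k + 1 : ℕ) : ℕ∞) < hitTime T B x ↔
      T x ∉ B ∧ (k : ℕ∞) < hitTime T B (T x) := by
  simp only [lt_hitTime_iff, ← iterate_succ_apply]
  refine ⟨fun h => ⟨h 1 one_pos (by omega), fun n hn hnk => h (n + 1) (by omega) (by omega)⟩,
    fun ⟨h1, h⟩ n hn hnk => ?_⟩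
  obtain ⟨m, rfl⟩ : ∃ m, n = m + 1 := ⟨n - 1, by omega⟩
  rcases m.eq_zero_or_pos with rfl | hm
  · exact h1
  · exact h m hm (by omega)

lemma hitTime_le_hitTime_apply_add_one (T : X → X) (B : Set X) (x : X) :
    hitTime T B x ≤ hitTime T B (T x) + 1 := by
  cases h : hitTime T B (T x) with
  | top => simp
  | coe N =>
    refine (hitTime_le_of_mem (n := N + 1) (by omega) ?_).trans (by push_cast; rfl)
    rw [iterate_succ_apply]
    exact iterate_hitTime_mem h

lemma hitTime_le_hitTime_iff :
    hitTime T A x ≤ hitTime T E x ↔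
      ∀ n : ℕ, 0 < n → T^[n] x ∈ E → hitTime T A x ≤ n := by
  refine ⟨fun h n hn hE => h.trans (hitTime_le_of_mem hn hE), fun h => ?_⟩
  cases hE : hitTime T E x with
  | top => exact le_top
  | coe N =>
    exact h N (by exact_mod_cast hE ▸ hitTime_pos) (iterate_hitTime_mem hE)

end HitTime

section Shadow

variable {X : Type*} {T : X → X} {A E F : Set X}

def shadowLevel (T : X → X) (A E : Set X) (k : ℕ) : Set X :=
  A ∩ {x | (k : ℕ∞) < hitTime T A x} ∩ (T^[k]) ⁻¹' E

lemma shadow_eq_iUnion_shadowLevel (T : X → X) (A E : Set X) :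
    shadow T A E = ⋃ k, shadowLevel T A E k :=
  rfl

lemma shadow_mono (h : E ⊆ F) : shadow T A E ⊆ shadow T A F :=
  iUnion_mono fun _ => inter_subset_inter_right _ (preimage_mono h)

lemma pairwise_disjoint_shadowLevel (hF : ∀ y ∈ F, hitTime T A y ≤ hitTime T F y) :
    Pairwise (Disjoint on shadowLevel T A F) := by
  refine (pairwise_disjoint_on _).2 fun k j hkj => disjoint_left.2 ?_
  rintro x ⟨-, hkF⟩ ⟨⟨-, hj⟩, hjF⟩
  have hFk : hitTime T F (T^[k] x) ≤ (j - k : ℕ) := by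
    refine hitTime_le_of_mem (by omega) ?_
    rwa [← iterate_add_apply, Nat.sub_add_cancel hkj.le]
  obtain ⟨m, hm, hmjk, hmA⟩ := hitTime_le_iff.1 ((hF _ hkF).trans hFk)
  exact lt_hitTime_iff.1 hj (m + k) (by omega) (by omega) (by rwa [iterate_add_apply])

lemma shadow_subset_shadow_inter_hitTime_le_union (T : X → X) (A E : Set X) :
    shadow T A E ⊆
      shadow T A (E ∩ {x | hitTime T A x ≤ hitTime T E x}) ∪ {x | hitTime T A x = ⊤} := by
  classical
  rintro x hx
  cases hN : hitTime T A x with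
  | top => exact Or.inr hN
  | coe N => ?_
  left
  obtain ⟨k, ⟨hxA, hk⟩, hkE⟩ := mem_iUnion.1 hx
  replace hk : k < N := by simpa [hN] using hk
  set j := Nat.findGreatest (fun j => T^[j] x ∈ E) (N - 1)
  have hjE : T^[j] x ∈ E := Nat.findGreatest_spec (P := fun j => T^[j] x ∈ E) (by omega) hkE
  have hjN : j < N := (Nat.findGreatest_le _).trans_lt (by omega)
  refine mem_iUnion.2 ⟨j, ⟨hxA, by simpa [hN] using hjN⟩, hjE, ?_⟩
  refine hitTime_le_hitTime_iff.2 fun n hn hnE => ?_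
  have hNj : N - j ≤ n := by
    by_contra! hlt
    have hmem : T^[n + j] x ∈ E := by rwa [iterate_add_apply]
    have : n + j ≤ j := Nat.le_findGreatest (P := fun j => T^[j] x ∈ E) (by omega) hmem
    omega
  refine (hitTime_le_of_mem (n := N - j) (by omega) ?_).trans (by exact_mod_cast hNj)
  rw [← iterate_add_apply, Nat.sub_add_cancel hjN.le]
  exact iterate_hitTime_mem hN

end Shadow

section Measure

variable {X : Type*} [MeasurableSpace X] {T : X → X} {A B F : Set X} {μ : Measure X}

lemma measurableSet_lt_hitTime (hT : Measurable T) (hB : MeasurableSet B) (k : ℕ) :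
    MeasurableSet {x | (k : ℕ∞) < hitTime T B x} := by
  have : {x | (k : ℕ∞) < hitTime T B x} = ⋂ n ∈ Icc 1 k, (T^[n]) ⁻¹' Bᶜ := by
    ext x
    simp [lt_hitTime_iff, Nat.one_le_iff_ne_zero, Nat.pos_iff_ne_zero]
  rw [this]
  exact .biInter (to_countable _) fun n _ => hT.iterate n hB.compl

lemma measurable_hitTime (hT : Measurable T) (hB : MeasurableSet B) :
    Measurable (hitTime T B) := by
  refine ENat.measurable_iff.2 fun n => ?_
  cases n with
  | zero =>
    convert MeasurableSet.empty
    exact eq_empty_of_forall_notMem fun x hx => hitTime_pos.ne' hx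
  | succ k =>
    have : hitTime T B ⁻¹' {((k + 1 : ℕ) : ℕ∞)} =
        {x | (k : ℕ∞) < hitTime T B x} \ {x | ((k + 1 : ℕ) : ℕ∞) < hitTime T B x} := by
      ext x
      simp only [mem_preimage, mem_singleton_iff, Set.mem_sdiff, mem_ofPred_eq, not_lt,
        ← ENat.add_one_le_iff (ENat.natCast_ne_top k), Nat.cast_succ]
      exact ⟨fun h => ⟨h.ge, h.le⟩, fun h => le_antisymm h.2 h.1⟩
    rw [this]
    exact (measurableSet_lt_hitTime hT hB k).diff (measurableSet_lt_hitTime hT hB (k + 1))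

lemma measurableSet_hitTime_le_hitTime (hT : Measurable T) (hA : MeasurableSet A)
    (hB : MeasurableSet B) : MeasurableSet {x | hitTime T A x ≤ hitTime T B x} :=
  (measurable_hitTime hT hA).prodMk (measurable_hitTime hT hB)
    (to_countable {p : ℕ∞ × ℕ∞ | p.1 ≤ p.2}).measurableSet

lemma measurableSet_shadowLevel (hT : Measurable T) (hA : MeasurableSet A)
    (hF : MeasurableSet F) (k : ℕ) : MeasurableSet (shadowLevel T A F k) :=
  (hA.inter (measurableSet_lt_hitTime hT hA k)).inter (hT.iterate k hF)

/-- The set of points whose orbit enters `A` is backward invariant and contains `T⁻¹' A`. -/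
lemma measure_hitTime_eq_top [IsFiniteMeasure μ] (hErg : Ergodic T μ)
    (hA : MeasurableSet A) (hA₀ : μ A ≠ 0) : μ {x | hitTime T A x = ⊤} = 0 := by
  set U := {x | hitTime T A x ≠ ⊤}
  have hU : MeasurableSet U :=
    measurable_hitTime hErg.measurable hA (measurableSet_singleton ⊤).compl
  have hTU : T ⁻¹' U ⊆ U := fun x hx =>
    ne_top_of_le_ne_top (WithTop.add_ne_top.2 ⟨hx, ENat.one_ne_top⟩)
      (hitTime_le_hitTime_apply_add_one T A x)
  have hAU : T ⁻¹' A ⊆ U := fun x hx =>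
    ne_top_of_le_ne_top (ENat.natCast_ne_top 1) (hitTime_le_of_mem one_pos (by simpa using hx))
  rcases hErg.ae_empty_or_univ_of_preimage_ae_le hU.nullMeasurableSet hTU.eventuallyLE with h | h
  · rw [ae_eq_empty] at h
    exact absurd (hErg.measure_preimage hA.nullMeasurableSet ▸ measure_mono_null hAU h) hA₀
  · convert ae_eq_univ.1 h using 2
    ext
    simp [U]

end Measure

section Kac

variable {X : Type*} [MeasurableSpace X] {T : X → X} {A F : Set X} {μ : Measure X}

lemma measure_lt_hitTime_inter_preimage_iterate (hT : MeasurePreserving T μ μ)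
    (hA : MeasurableSet A) (hF : MeasurableSet F) (k : ℕ) :
    μ ({x | (k : ℕ∞) < hitTime T A x} ∩ T^[k] ⁻¹' F) =
      μ ({x | ((k + 1 : ℕ) : ℕ∞) < hitTime T A x} ∩ T^[k + 1] ⁻¹' F) +
        μ (shadowLevel T A F k) := by
  set Z := {x | (k : ℕ∞) < hitTime T A x} ∩ T^[k] ⁻¹' F
  have hZ : MeasurableSet Z :=
    (measurableSet_lt_hitTime hT.measurable hA k).inter (hT.measurable.iterate k hF)
  have hnext : T ⁻¹' Z \ T ⁻¹' A =
      {x | ((k + 1 : ℕ) : ℕ∞) < hitTime T A x} ∩ T^[k + 1] ⁻¹' F := by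
    ext x
    simp only [Set.mem_sdiff, mem_preimage, mem_inter_iff, mem_ofPred_eq, succ_lt_hitTime_iff,
      iterate_succ_apply, Z]
    tauto
  have hlevel : T ⁻¹' Z ∩ T ⁻¹' A = T ⁻¹' shadowLevel T A F k := by
    rw [← preimage_inter, inter_comm, shadowLevel, inter_assoc]
  have hD := measurableSet_shadowLevel hT.measurable hA hF k
  rw [← hT.measure_preimage hZ.nullMeasurableSet,
    ← measure_inter_add_sdiff _ (hT.measurable hA), hnext, hlevel,
    hT.measure_preimage hD.nullMeasurableSet, add_comm]

/-- A form of Kac's lemma. -/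
lemma tsum_measure_shadowLevel [IsFiniteMeasure μ] (hT : MeasurePreserving T μ μ)
    (hA : MeasurableSet A) (hF : MeasurableSet F) (hA_rec : μ {x | hitTime T A x = ⊤} = 0) :
    ∑' k, μ (shadowLevel T A F k) = μ F := by
  set Z : ℕ → Set X := fun n => {x | (n : ℕ∞) < hitTime T A x} ∩ T^[n] ⁻¹' F
  have hsum : ∀ n, ∑ k ∈ Finset.range n, μ (shadowLevel T A F k) + μ (Z n) = μ F := by
    intro n
    induction n with
    | zero => simp [Z, hitTime_pos]
    | succ n ih =>
      rw [Finset.sum_range_succ, add_assoc, add_comm (μ _),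
        ← measure_lt_hitTime_inter_preimage_iterate hT hA hF n, ih]
  have hZ : Tendsto (fun n => μ (Z n)) atTop (𝓝 0) := by
    have hanti : Antitone fun n : ℕ => {x | (n : ℕ∞) < hitTime T A x} :=
      fun m n hmn x (hx : (n : ℕ∞) < _) =>
        show (m : ℕ∞) < _ from (Nat.cast_le.2 hmn).trans_lt hx
    have hinter : ⋂ n : ℕ, {x | (n : ℕ∞) < hitTime T A x} = {x | hitTime T A x = ⊤} := by
      ext x
      simp [ENat.eq_top_iff_forall_gt]
    have hlim := tendsto_measure_iInter_atTop
      (fun n => (measurableSet_lt_hitTime hT.measurable hA n).nullMeasurableSet) hanti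
      ⟨0, measure_ne_top μ _⟩
    rw [hinter, hA_rec] at hlim
    exact tendsto_of_tendsto_of_tendsto_of_le_of_le tendsto_const_nhds hlim
      (fun _ => zero_le) fun n => measure_mono inter_subset_left
  have hlim := (ENNReal.tendsto_nat_tsum fun k => μ (shadowLevel T A F k)).add hZ
  rw [add_zero] at hlim
  exact tendsto_nhds_unique hlim (by simp only [hsum]; exact tendsto_const_nhds)

lemma measure_shadow_of_hitTime_le [IsFiniteMeasure μ] (hT : MeasurePreserving T μ μ)
    (hA : MeasurableSet A) (hF : MeasurableSet F) (hA_rec : μ {x | hitTime T A x = ⊤} = 0)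
    (hFA : ∀ y ∈ F, hitTime T A y ≤ hitTime T F y) : μ (shadow T A F) = μ F := by
  rw [shadow_eq_iUnion_shadowLevel,
    measure_iUnion (pairwise_disjoint_shadowLevel hFA)
      (measurableSet_shadowLevel hT.measurable hA hF),
    tsum_measure_shadowLevel hT hA hF hA_rec]

end Kac

theorem statement0_general {X : Type*} [MeasurableSpace X]
    (T : X → X) (μ : Measure X) [IsProbabilityMeasure μ] (hErg : Ergodic T μ)
    (A E : Set X) (hA : MeasurableSet A) (hE : MeasurableSet E) (hApos : 0 < μ A) :
    μ (shadow T A E) = μ (E ∩ {x | hitTime T A x ≤ hitTime T E x}) ∧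
    μ (symmDiff (shadow T A E)
        (⋃ k : ℕ, A ∩ {x | (k : ℕ∞) < hitTime T A x} ∩
          (T^[k]) ⁻¹' (E ∩ {x | hitTime T A x ≤ hitTime T E x}))) = 0 ∧
    Pairwise (Function.onFun Disjoint
      (fun k : ℕ => A ∩ {x | (k : ℕ∞) < hitTime T A x} ∩
        (T^[k]) ⁻¹' (E ∩ {x | hitTime T A x ≤ hitTime T E x}))) := by
  set F := E ∩ {x | hitTime T A x ≤ hitTime T E x}
  have hF : MeasurableSet F :=
    hE.inter (measurableSet_hitTime_le_hitTime hErg.measurable hA hE)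
  have hFA : ∀ y ∈ F, hitTime T A y ≤ hitTime T F y :=
    fun y hy => hy.2.trans (hitTime_anti inter_subset_left)
  have hA_rec := measure_hitTime_eq_top hErg hA hApos.ne'
  have hsymm : symmDiff (shadow T A E) (shadow T A F) ⊆ {x | hitTime T A x = ⊤} := by
    rw [Set.symmDiff_def, sdiff_eq_empty.2 (shadow_mono inter_subset_left), union_empty]
    exact sdiff_subset_iff.2 (shadow_subset_shadow_inter_hitTime_le_union T A E)
  have hnull : μ (symmDiff (shadow T A E) (shadow T A F)) = 0 := measure_mono_null hsymm hA_rec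
  refine ⟨?_, hnull, pairwise_disjoint_shadowLevel hFA⟩
  rw [measure_congr (measure_symmDiff_eq_zero_iff.1 hnull),
    measure_shadow_of_hitTime_le hErg.toMeasurePreserving hA hF hA_rec hFA]

/-- For an ergodic measure-preserving system `(X, 𝔅, μ, T)`, a set `A` of
positive measure and a measurable set `E`, the shadow `E'_A` of `E` in `A` satisfies
`μ(E'_A) = μ(E ∩ {r_A ≤ r_E})`; moreover, up to a `μ`-null set, `E'_A` equals the pairwise
disjoint union `⋃_{k ≥ 0} (A ∩ {r_A > k} ∩ T^{-k}(E ∩ {r_A ≤ r_E}))`. -/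
theorem statement0 {X : Type*} [MetricSpace X] [MeasurableSpace X] [BorelSpace X]
    (T : X → X) (μ : Measure X) [IsProbabilityMeasure μ] (hErg : Ergodic T μ)
    (A E : Set X) (hA : MeasurableSet A) (hE : MeasurableSet E) (hApos : 0 < μ A) :
    μ (shadow T A E) = μ (E ∩ {x | hitTime T A x ≤ hitTime T E x}) ∧
    μ (symmDiff (shadow T A E)
        (⋃ k : ℕ, A ∩ {x | (k : ℕ∞) < hitTime T A x} ∩
          (T^[k]) ⁻¹' (E ∩ {x | hitTime T A x ≤ hitTime T E x}))) = 0 ∧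
    Pairwise (Function.onFun Disjoint
      (fun k : ℕ => A ∩ {x | (k : ℕ∞) < hitTime T A x} ∩
        (T^[k]) ⁻¹' (E ∩ {x | hitTime T A x ≤ hitTime T E x}))) :=
  statement0_general T μ hErg A E hA hE hApos
end

section
/- Let T : I → I be a Borel measurable map of a compact interval I, let ζ ∈ I be a periodic point of T of period p ≥ 1 such that T^p restricted to some neighbourhood of ζ is a C¹ diffeomorphism onto its image with |(T^p)′(ζ)| > 1, and let μ be a T-invariant Borel probability measure on I, absolutely continuous with respect to Lebesgue measure, whose density has a version that is continuous and strictly positive at ζ. Let (B_n) be open balls centred at ζ with radii tending to 0, and E(B_n) = T^{−p}(B_n) ∖ B_n. Then for every sequence of Borel sets A_n ⊆ B_n with μ(A_n) > 0, one has μ_{E(B_n)}(T^{−p}(A_n)) / μ_{B_n}(A_n) → 1 as n → ∞; that is, the push-forward of the conditional measure μ_{E(B_n)} under T^p is asymptotically equivalent to μ_{B_n} on subsets of B_n. -/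
open MeasureTheory Filter Set ProbabilityTheory
open scoped ENNReal Topology

noncomputable section

variable {X : Type*}

/-- `U_0(B) = B` and `U_{k+1}(B) = T^{-p}(U_k(B)) ∩ B`. -/
def Uset (T : X → X) (p : ℕ) (B : Set X) : ℕ → Set X
  | 0 => B
  | (k+1) => (T^[p]) ⁻¹' (Uset T p B k) ∩ B

/-- The annuli: `Q_0(B) = B ∩ T^{-p}(Bᶜ)` and `Q_{k+1}(B) = T^{-p}(Q_k(B)) ∩ B`. -/
def Qann (T : X → X) (p : ℕ) (B : Set X) : ℕ → Set X
  | 0 => B ∩ (T^[p]) ⁻¹' Bᶜ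
  | (k+1) => (T^[p]) ⁻¹' (Qann T p B k) ∩ B

/-- The entrance set `E(B) = T^{-p}(B) ∖ B`. -/
def Eset (T : X → X) (p : ℕ) (B : Set X) : Set X := (T^[p]) ⁻¹' B \ B

end


/-!
Since `T^p` preserves `μ` and `A ⊆ B`, we have `μ(E(B) ∩ T^{-p}A) = μ(A) - μ(T^{-p}A ∩ B)` and
`μ(E(B)) = μ(B) - μ(T^{-p}B ∩ B)`, so the ratio in question equals `(1 - F) / (1 - G)` with
`F = μ(T^{-p}A ∩ B) / μ(A)` and `G = μ(T^{-p}B ∩ B) / μ(B)`. On a small ball `B` around `ζ` the map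
`T^p` is injective, expands by a factor close to `λ = |(T^p)'(ζ)| > 1` (so `T^p(B) ⊇ B`), and the
density is close to `ρ(ζ)`; the change of variables formula then shows
`μ(T^{-p}S ∩ B) / μ(S) → λ⁻¹` uniformly over `S ⊆ B`. Hence `F, G → λ⁻¹` and the ratio tends to
`(1 - λ⁻¹) / (1 - λ⁻¹) = 1`.
-/

open Metric

theorem mul_abs_sub_le_abs_sub_of_le_abs_deriv {f : ℝ → ℝ} {a b m : ℝ}
    (hf : ∀ x ∈ uIcc a b, DifferentiableAt ℝ f x) (hm : ∀ x ∈ uIcc a b, m ≤ |deriv f x|) :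
    m * |b - a| ≤ |f b - f a| := by
  wlog hab : a < b generalizing a b
  · rcases (not_lt.1 hab).eq_or_lt with rfl | hba
    · simp
    · rw [abs_sub_comm, abs_sub_comm (f b)]
      exact this (uIcc_comm a b ▸ hf) (uIcc_comm a b ▸ hm) hba
  have hsub : Icc a b ⊆ uIcc a b := Icc_subset_uIcc
  obtain ⟨c, hc, hslope⟩ := exists_deriv_eq_slope f hab
    (fun x hx => (hf x (hsub hx)).continuousAt.continuousWithinAt)
    (fun x hx => (hf x (hsub (Ioo_subset_Icc_self hx))).differentiableWithinAt)
  have hba : 0 < b - a := sub_pos.2 hab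
  calc m * |b - a| ≤ |deriv f c| * |b - a| :=
        mul_le_mul_of_nonneg_right (hm c (hsub (Ioo_subset_Icc_self hc))) (abs_nonneg _)
    _ = |f b - f a| := by
        rw [hslope, abs_div, abs_of_pos hba, div_mul_cancel₀ _ hba.ne']

theorem ball_subset_image_ball_of_expanding {φ : ℝ → ℝ} {ζ r m : ℝ} (hm : 1 < m)
    (hφζ : φ ζ = ζ) (hdiff : ∀ x ∈ ball ζ r, DifferentiableAt ℝ φ x)
    (hinj : InjOn φ (ball ζ r)) (hexp : ∀ x ∈ ball ζ r, m ≤ |deriv φ x|) :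
    ball ζ r ⊆ φ '' ball ζ r := by
  intro y hy
  have hr : 0 < r := pos_of_mem_ball hy
  have hm0 : 0 < m := one_pos.trans hm
  -- `ζ ± r/m` lie in the ball and are sent at distance `≥ r` from `ζ`, on opposite sides.
  set c := r / m
  have hc : 0 < c := div_pos hr hm0
  have hcr : c < r := div_lt_self hr hm
  have hIcc : Icc (ζ - c) (ζ + c) ⊆ ball ζ r := by
    intro x hx
    rw [mem_ball, Real.dist_eq, abs_sub_lt_iff]
    constructor <;> linarith [hx.1, hx.2]
  have hfar : ∀ x ∈ Icc (ζ - c) (ζ + c), |x - ζ| = c → r ≤ |φ x - ζ| := by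
    intro x hx hxc
    have huIcc : uIcc ζ x ⊆ ball ζ r := (convex_ball ζ r).ordConnected.uIcc_subset (mem_ball_self hr)
      (hIcc hx)
    have := mul_abs_sub_le_abs_sub_of_le_abs_deriv (fun z hz => hdiff z (huIcc hz))
      (fun z hz => hexp z (huIcc hz))
    rwa [hφζ, hxc, mul_div_cancel₀ _ hm0.ne'] at this
  have hlo : ζ - c ∈ Icc (ζ - c) (ζ + c) := left_mem_Icc.2 (by linarith)
  have hhi : ζ + c ∈ Icc (ζ - c) (ζ + c) := right_mem_Icc.2 (by linarith)
  have hmid : ζ ∈ Icc (ζ - c) (ζ + c) := ⟨by linarith, by linarith⟩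
  have hlo_far := hfar _ hlo (by rw [sub_sub_cancel_left, abs_neg, abs_of_pos hc])
  have hhi_far := hfar _ hhi (by rw [add_sub_cancel_left, abs_of_pos hc])
  have hcont : ContinuousOn φ (uIcc (ζ - c) (ζ + c)) := by
    rw [uIcc_of_le (by linarith)]
    exact fun x hx => (hdiff x (hIcc hx)).continuousAt.continuousWithinAt
  have hy' : y ∈ uIcc (φ (ζ - c)) (φ (ζ + c)) := by
    rw [mem_ball, Real.dist_eq, abs_sub_lt_iff] at hy
    have hinj' : InjOn φ (Icc (ζ - c) (ζ + c)) := hinj.mono hIcc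
    rcases (hcont.mono Icc_subset_uIcc).strictMonoOn_of_injOn_Icc' (by linarith) hinj'
      with hmono | hanti
    · have h1 := hmono hlo hmid (by linarith)
      have h2 := hmono hmid hhi (by linarith)
      rw [hφζ] at h1 h2
      rw [abs_of_neg (by linarith)] at hlo_far
      rw [abs_of_pos (by linarith)] at hhi_far
      exact Icc_subset_uIcc ⟨by linarith, by linarith⟩
    · have h1 := hanti hlo hmid (by linarith)
      have h2 := hanti hmid hhi (by linarith)
      rw [hφζ] at h1 h2
      rw [abs_of_pos (by linarith)] at hlo_far
      rw [abs_of_neg (by linarith)] at hhi_far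
      exact Icc_subset_uIcc' ⟨by linarith, by linarith⟩
  obtain ⟨x, hx, rfl⟩ := intermediate_value_uIcc hcont hy'
  exact ⟨x, hIcc (by rwa [uIcc_of_le (by linarith)] at hx), rfl⟩

theorem toReal_setLIntegral_ofReal_mem_Icc {α : Type*} [MeasurableSpace α] {μ : Measure α}
    {s : Set α} (hs : MeasurableSet s) (hμs : μ s ≠ ∞) {g : α → ℝ} {a b : ℝ} (ha : 0 ≤ a)
    (hg : ∀ x ∈ s, g x ∈ Icc a b) :
    (∫⁻ x in s, ENNReal.ofReal (g x) ∂μ).toReal ∈ Icc (a * μ.real s) (b * μ.real s) := by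
  rcases s.eq_empty_or_nonempty with rfl | ⟨x₀, hx₀⟩
  · simp
  have hb : 0 ≤ b := ha.trans ((hg x₀ hx₀).1.trans (hg x₀ hx₀).2)
  have hlower : ENNReal.ofReal a * μ s ≤ ∫⁻ x in s, ENNReal.ofReal (g x) ∂μ := by
    rw [← setLIntegral_const]
    exact setLIntegral_mono' hs fun x hx => ENNReal.ofReal_le_ofReal (hg x hx).1
  have hupper : ∫⁻ x in s, ENNReal.ofReal (g x) ∂μ ≤ ENNReal.ofReal b * μ s := by
    rw [← setLIntegral_const]
    exact setLIntegral_mono' hs fun x hx => ENNReal.ofReal_le_ofReal (hg x hx).2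
  constructor
  · rw [← ENNReal.toReal_ofReal ha, measureReal_def, ← ENNReal.toReal_mul]
    exact ENNReal.toReal_mono (ne_top_of_le_ne_top (by finiteness) hupper) hlower
  · rw [← ENNReal.toReal_ofReal hb, measureReal_def, ← ENNReal.toReal_mul]
    exact ENNReal.toReal_mono (by finiteness) hupper

theorem measureReal_div_measureReal_image_mem_Icc {ρ φ φ' : ℝ → ℝ} {μ : Measure ℝ}
    (hμ : μ = volume.withDensity fun x => ENNReal.ofReal (ρ x)) {t V : Set ℝ} {c L κ : ℝ}
    (hc : 0 < c) (hL : 0 < L) (hκ : 0 < κ) (ht : MeasurableSet t) (hvol : volume t ≠ ∞)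
    (htV : t ⊆ V) (hφtV : MapsTo φ t V)
    (hφ' : ∀ x ∈ t, HasDerivWithinAt φ (φ' x) t x) (hinj : InjOn φ t)
    (hφ'L : ∀ x ∈ t, |φ' x| ∈ Icc (L / κ) (κ * L)) (hρc : ∀ x ∈ V, ρ x ∈ Icc (c / κ) (κ * c))
    (hpos : 0 < μ.real (φ '' t)) :
    μ.real t / μ.real (φ '' t) ∈ Icc (L⁻¹ / κ ^ 3) (κ ^ 3 * L⁻¹) := by
  set v := volume.real t
  have hmass : _ ∈ Icc (c / κ * v) (κ * c * v) :=
    toReal_setLIntegral_ofReal_mem_Icc ht hvol (by positivity) fun x hx => hρc x (htV hx)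
  rw [← withDensity_apply _ ht, ← hμ, ← measureReal_def] at hmass
  have himage : _ ∈ Icc (L / κ * (c / κ) * v) (κ * L * (κ * c) * v) :=
    toReal_setLIntegral_ofReal_mem_Icc ht hvol (by positivity) fun x hx => by
      obtain ⟨hφ'₁, hφ'₂⟩ := hφ'L x hx
      obtain ⟨hρ₁, hρ₂⟩ := hρc _ (hφtV hx)
      have : 0 < c / κ := by positivity
      exact ⟨mul_le_mul hφ'₁ hρ₁ this.le (abs_nonneg _),
        mul_le_mul hφ'₂ hρ₂ (this.le.trans hρ₁) (by positivity)⟩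
  simp_rw [ENNReal.ofReal_mul (abs_nonneg _)] at himage
  rw [← lintegral_image_eq_lintegral_abs_deriv_mul ht hφ' hinj fun y => ENNReal.ofReal (ρ y),
    ← withDensity_apply', ← hμ, ← measureReal_def] at himage
  have hv : 0 < v := by
    by_contra! hv
    nlinarith [himage.2, show 0 < κ * L * (κ * c) by positivity]
  constructor
  · rw [le_div_iff₀ hpos]
    calc L⁻¹ / κ ^ 3 * μ.real (φ '' t) ≤ L⁻¹ / κ ^ 3 * (κ * L * (κ * c) * v) := by
          gcongr; exact himage.2
      _ = c / κ * v := by field_simp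
      _ ≤ _ := hmass.1
  · rw [div_le_iff₀ hpos]
    calc μ.real t ≤ κ * c * v := hmass.2
      _ = κ ^ 3 * L⁻¹ * (L / κ * (c / κ) * v) := by field_simp
      _ ≤ _ := by gcongr; exact himage.1

theorem tendsto_of_eventually_mem_Icc_div_pow_three {ι : Type*} {l : Filter ι} {f : ι → ℝ}
    {L : ℝ} (h : ∀ᶠ κ in 𝓝[>] (1 : ℝ), ∀ᶠ i in l, f i ∈ Icc (L / κ ^ 3) (κ ^ 3 * L)) :
    Tendsto f l (𝓝 L) := by
  have hlower : Tendsto (fun κ : ℝ => L / κ ^ 3) (𝓝[>] 1) (𝓝 L) := by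
    have : ContinuousAt (fun κ : ℝ => L / κ ^ 3) 1 := by fun_prop (disch := norm_num)
    simpa using this.tendsto.mono_left nhdsWithin_le_nhds
  have hupper : Tendsto (fun κ : ℝ => κ ^ 3 * L) (𝓝[>] 1) (𝓝 L) := by
    have : ContinuousAt (fun κ : ℝ => κ ^ 3 * L) 1 := by fun_prop
    simpa using this.tendsto.mono_left nhdsWithin_le_nhds
  refine tendsto_order.2 ⟨fun a ha => ?_, fun b hb => ?_⟩
  · obtain ⟨κ, hκa, hκ⟩ := ((hlower.eventually_const_lt ha).and h).exists
    exact hκ.mono fun i hi => hκa.trans_le hi.1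
  · obtain ⟨κ, hκb, hκ⟩ := ((hupper.eventually_lt_const hb).and h).exists
    exact hκ.mono fun i hi => hi.2.trans_lt hκb

theorem ContinuousAt.eventually_mem_Icc_div_mul {g : ℝ → ℝ} {ζ κ : ℝ} (hg : ContinuousAt g ζ)
    (hgζ : 0 < g ζ) (hκ : 1 < κ) : ∀ᶠ x in 𝓝 ζ, g x ∈ Icc (g ζ / κ) (κ * g ζ) :=
  hg.eventually_mem (Icc_mem_nhds (div_lt_self hgζ hκ) (lt_mul_left hgζ hκ))

theorem tendsto_measureReal_preimage_inter_ball_div {φ ρ : ℝ → ℝ} {μ : Measure ℝ}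
    (hμ : μ = volume.withDensity fun x => ENNReal.ofReal (ρ x)) {ζ : ℝ} {U : Set ℝ}
    (hφ : Measurable φ) (hφζ : φ ζ = ζ) (hU : IsOpen U) (hζU : ζ ∈ U)
    (hC1 : ContDiffOn ℝ 1 φ U) (hinj : InjOn φ U) (hexp : 1 < |deriv φ ζ|)
    (hρ : ContinuousAt ρ ζ) (hρζ : 0 < ρ ζ) {ι : Type*} {l : Filter ι} {r : ι → ℝ}
    (hr : Tendsto r l (𝓝 0)) {S : ι → Set ℝ} (hS : ∀ i, MeasurableSet (S i))
    (hSr : ∀ i, S i ⊆ ball ζ (r i)) (hSpos : ∀ i, 0 < μ.real (S i)) :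
    Tendsto (fun i => μ.real (φ ⁻¹' S i ∩ ball ζ (r i)) / μ.real (S i)) l
      (𝓝 |deriv φ ζ|⁻¹) := by
  set L := |deriv φ ζ|
  have hL : 0 < L := one_pos.trans hexp
  have hdiff : ∀ x ∈ U, DifferentiableAt ℝ φ x := fun x hx =>
    (hC1.differentiableOn one_ne_zero).differentiableAt (hU.mem_nhds hx)
  have hderiv : ContinuousAt (fun x => |deriv φ x|) ζ :=
    ((hC1.continuousOn_deriv_of_isOpen hU le_rfl).continuousAt (hU.mem_nhds hζU)).abs
  apply tendsto_of_eventually_mem_Icc_div_pow_three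
  filter_upwards [Ioo_mem_nhdsGT hexp] with κ hκ
  obtain ⟨δ, hδ, hball⟩ := Metric.eventually_nhds_iff_ball.1 <| (hU.eventually_mem hζU).and <|
    (hderiv.eventually_mem_Icc_div_mul hL hκ.1).and (hρ.eventually_mem_Icc_div_mul hρζ hκ.1)
  filter_upwards [hr.eventually_lt_const hδ] with i hi
  have hsub : ball ζ (r i) ⊆ ball ζ δ := ball_subset_ball hi.le
  have himage : φ '' (φ ⁻¹' S i ∩ ball ζ (r i)) = S i := by
    refine image_preimage_inter φ _ _ ▸ inter_eq_left.2 ((hSr i).trans ?_)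
    exact ball_subset_image_ball_of_expanding ((one_lt_div (one_pos.trans hκ.1)).2 hκ.2) hφζ
      (fun x hx => hdiff x (hball x (hsub hx)).1) (hinj.mono fun x hx => (hball x (hsub hx)).1)
      (fun x hx => (hball x (hsub hx)).2.1.1)
  have := measureReal_div_measureReal_image_mem_Icc hμ hρζ hL (one_pos.trans hκ.1)
    ((hφ (hS i)).inter measurableSet_ball)
    (measure_ne_top_of_subset inter_subset_right measure_ball_lt_top.ne)
    (inter_subset_right.trans hsub) (fun x hx => hsub (hSr i hx.1))
    (fun x hx => (hdiff x (hball x (hsub hx.2)).1).hasDerivAt.hasDerivWithinAt)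
    (hinj.mono fun x hx => (hball x (hsub hx.2)).1) (fun x hx => (hball x (hsub hx.2)).2.1)
    (fun x hx => (hball x hx).2.2) (by rw [himage]; exact hSpos i)
  rwa [himage] at this

theorem cond_apply_eq_ofReal {α : Type*} [MeasurableSpace α] {μ : Measure α}
    [IsFiniteMeasure μ] {s : Set α} (hs : MeasurableSet s) (t : Set α) :
    μ[t|s] = ENNReal.ofReal (μ.real (s ∩ t) / μ.real s) := by
  rw [cond_apply hs]
  by_cases h : μ s = 0
  · simp [h, measureReal_def, measure_mono_null inter_subset_left h]
  rw [measureReal_def, measureReal_def,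
    ENNReal.ofReal_div_of_pos (ENNReal.toReal_pos h (measure_ne_top μ s)), ENNReal.ofReal_toReal (measure_ne_top μ _),
    ENNReal.ofReal_toReal (measure_ne_top μ _), ENNReal.div_eq_inv_mul]

theorem cond_preimage_sdiff_div_cond_eq_ofReal {α : Type*} [MeasurableSpace α] {μ : Measure α}
    [IsFiniteMeasure μ] {φ : α → α} (hφ : MeasurePreserving φ μ μ) {A B : Set α}
    (hA : MeasurableSet A) (hB : MeasurableSet B) (hAB : A ⊆ B) (hApos : 0 < μ.real A) :
    μ[|φ ⁻¹' B \ B] (φ ⁻¹' A) / μ[|B] A = ENNReal.ofReal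
      ((1 - μ.real (φ ⁻¹' A ∩ B) / μ.real A) / (1 - μ.real (φ ⁻¹' B ∩ B) / μ.real B)) := by
  have hBpos : 0 < μ.real B := hApos.trans_le (measureReal_mono hAB)
  have hentrance : (φ ⁻¹' B \ B) ∩ φ ⁻¹' A = φ ⁻¹' A \ B := by
    ext x
    simp only [mem_inter_iff, Set.mem_sdiff, mem_preimage]
    exact ⟨fun h => ⟨h.2, h.1.2⟩, fun h => ⟨⟨hAB h.1, h.2⟩, h.1⟩⟩
  have hsplit : ∀ s, MeasurableSet s → μ.real (φ ⁻¹' s \ B) = μ.real s - μ.real (φ ⁻¹' s ∩ B) :=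
    fun s hs => by
      rw [← hφ.measureReal_preimage hs.nullMeasurableSet]
      exact eq_sub_of_add_eq (measureReal_sdiff_add_inter hB)
  rw [cond_apply_eq_ofReal ((hφ.measurable hB).diff hB), cond_apply_eq_ofReal hB,
    inter_eq_right.2 hAB, ← ENNReal.ofReal_div_of_pos (div_pos hApos hBpos), hentrance,
    hsplit A hA, hsplit B hB, div_div_div_comm, one_sub_div hApos.ne', one_sub_div hBpos.ne']

theorem statement11_general (T : ℝ → ℝ) (hTmeas : Measurable T) (ζ : ℝ) (p : ℕ) (hper : T^[p] ζ = ζ)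
    (U : Set ℝ) (hU : IsOpen U) (hζU : ζ ∈ U)
    (hC1 : ContDiffOn ℝ 1 (T^[p]) U) (hinj : Set.InjOn (T^[p]) U) (hexp : 1 < |deriv (T^[p]) ζ|)
    (μ : Measure ℝ) [IsProbabilityMeasure μ] (hinv : MeasurePreserving T μ μ)
    (ρ : ℝ → ℝ) (hρ : μ = MeasureTheory.volume.withDensity (fun x => ENNReal.ofReal (ρ x)))
    (hρcont : ContinuousAt ρ ζ) (hρpos : 0 < ρ ζ)
    (r : ℕ → ℝ) (hr0 : Tendsto r atTop (𝓝 0)) :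
    ∀ A : ℕ → Set ℝ, (∀ n, MeasurableSet (A n)) → (∀ n, A n ⊆ Metric.ball ζ (r n)) →
      (∀ n, 0 < μ (A n)) →
      Tendsto (fun n =>
          μ[|Eset T p (Metric.ball ζ (r n))] ((T^[p]) ⁻¹' (A n)) /
            μ[|Metric.ball ζ (r n)] (A n)) atTop (𝓝 1) := by
  intro A hAm hAB hApos
  have hApos' : ∀ n, 0 < μ.real (A n) := fun n =>
    ENNReal.toReal_pos (hApos n).ne' (measure_ne_top μ _)
  have hBpos : ∀ n, 0 < μ.real (ball ζ (r n)) := fun n =>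
    (hApos' n).trans_le (measureReal_mono (hAB n))
  have hF := tendsto_measureReal_preimage_inter_ball_div hρ (hTmeas.iterate p) hper hU hζU hC1
    hinj hexp hρcont hρpos hr0 hAm hAB hApos'
  have hG := tendsto_measureReal_preimage_inter_ball_div hρ (hTmeas.iterate p) hper hU hζU hC1
    hinj hexp hρcont hρpos hr0 (fun _ => measurableSet_ball) (fun _ => subset_rfl) hBpos
  have hL : 1 - |deriv (T^[p]) ζ|⁻¹ ≠ 0 := sub_ne_zero.2 (inv_lt_one_of_one_lt₀ hexp).ne'
  have hlim := ENNReal.tendsto_ofReal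
    (((tendsto_const_nhds (x := (1 : ℝ))).sub hF).div (tendsto_const_nhds.sub hG) hL)
  rw [div_self hL, ENNReal.ofReal_one] at hlim
  refine hlim.congr fun n => ?_
  exact (cond_preimage_sdiff_div_cond_eq_ofReal (hinv.iterate p) (hAm n) measurableSet_ball
    (hAB n) (hApos' n)).symm

/-- In the setting of a periodic point `ζ` of period `p` at which `T^p`
is locally a `C¹` diffeomorphism with `|(T^p)'(ζ)| > 1`, with an invariant absolutely
continuous measure whose density is continuous and positive at `ζ`: for shrinking balls
`B_n` around `ζ`, entrance sets `E(B_n) = T^{-p}(B_n) ∖ B_n`, and any Borel sets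
`A_n ⊆ B_n` with `μ(A_n) > 0`, one has
`μ_{E(B_n)}(T^{-p}(A_n)) / μ_{B_n}(A_n) → 1`. -/
theorem statement11 (T : ℝ → ℝ) (hTmeas : Measurable T)
    (l u : ℝ) (hlu : l < u) (hmap : Set.MapsTo T (Set.Icc l u) (Set.Icc l u))
    (ζ : ℝ) (hζI : ζ ∈ Set.Icc l u)
    (p : ℕ) (hp : 1 ≤ p) (hper : T^[p] ζ = ζ)
    (U : Set ℝ) (hU : IsOpen U) (hζU : ζ ∈ U)
    (hC1 : ContDiffOn ℝ 1 (T^[p]) U) (hinj : Set.InjOn (T^[p]) U)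
    (hd : ∀ x ∈ U, deriv (T^[p]) x ≠ 0) (hexp : 1 < |deriv (T^[p]) ζ|)
    (μ : Measure ℝ) [IsProbabilityMeasure μ] (hinv : MeasurePreserving T μ μ)
    (hsupp : μ (Set.Icc l u)ᶜ = 0)
    (ρ : ℝ → ℝ) (hρ : μ = MeasureTheory.volume.withDensity (fun x => ENNReal.ofReal (ρ x)))
    (hρcont : ContinuousAt ρ ζ) (hρpos : 0 < ρ ζ)
    (r : ℕ → ℝ) (hrpos : ∀ n, 0 < r n) (hr0 : Tendsto r atTop (𝓝 0)) :
    ∀ A : ℕ → Set ℝ, (∀ n, MeasurableSet (A n)) → (∀ n, A n ⊆ Metric.ball ζ (r n)) →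
      (∀ n, 0 < μ (A n)) →
      Tendsto (fun n =>
          μ[|Eset T p (Metric.ball ζ (r n))] ((T^[p]) ⁻¹' (A n)) /
            μ[|Metric.ball ζ (r n)] (A n)) atTop (𝓝 1) :=
  statement11_general T hTmeas ζ p hper U hU hζU hC1 hinj hexp μ hinv ρ hρ hρcont hρpos r hr0
end

section
/- Let T ∈ 𝔉 be a doubly intermittent full branch map of I = [−1,1], set A = Δ₀^+ = T^{−1}((−1,0)) ∩ I_+, and let B be an interval whose closure is contained in (−1,0) with T(B) ∩ B = ∅. For k ≥ 1 set B'(k) = T_+^{−1}(T_−^{−(k−1)}(B)). Then for every k ≥ 1: A ∩ {r_A > k} ∩ T^{−k}(B) = B'(k); the sets B'(k) are pairwise disjoint intervals contained in A; T^k maps B'(k) bijectively onto B; and the shadow of B in A equals B'_A = ⋃_{k≥1} B'(k). Moreover, for ζ ∈ (−1,0), the points α_k = T_+^{−1}(T_−^{−(k−1)}(ζ)) form a strictly decreasing sequence converging to 0, and α_k is the unique point α ∈ A with T^k(α) = ζ and T^j(α) ∉ A for all 1 ≤ j ≤ k. -/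
/-!
Write `A = Δ₀⁺`. A point of `{-1} ∪ [0, 1]` outside `A` is mapped into `{-1} ∪ [0, 1]`, so a
point of `A` whose next `k` iterates avoid `A` and whose `k`-th iterate lies in `B ⊆ (-1, 0)`
has `T x, …, T^k x ∈ (-1, 0)`. On `(-1, 0)` the map is the increasing left branch `T_-`, so
these points are exactly `B'(k) = T_+^{-1} T_-^{-(k-1)} B`, and `T^k = T_-^{k-1} ∘ T_+` is a
strictly increasing bijection of `B'(k)` onto `B`. Since `T_- x > x` on `(-1, 0)`, an orbit
visiting the interval `B` at two times `k < k'` increases in between and so passes through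
`T^{k+1} x ∈ T(B) ∩ B = ∅`; this makes the `B'(k)` disjoint. For a single point `ζ`,
`T_+ α_k` is the backward `T_-`-orbit of `ζ`, which decreases to the fixed point `-1`, so
`α_k` decreases to `T_+^{-1}(-1) = 0`.
-/

open MeasureTheory Filter Set ProbabilityTheory
open scoped ENNReal Topology ENat

noncomputable section

open Real

/-- `Δ_n^-`: the sets `Δ_0^- = T^{-1}((0,1)) ∩ I_-` and `Δ_n^- = T^{-1}(Δ_{n-1}^-) ∩ I_-`. -/
def DeltaNeg (T : ℝ → ℝ) : ℕ → Set ℝ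
  | 0 => T ⁻¹' (Set.Ioo 0 1) ∩ Set.Icc (-1) 0
  | (n+1) => T ⁻¹' (DeltaNeg T n) ∩ Set.Icc (-1) 0

/-- `Δ_n^+`: the sets `Δ_0^+ = T^{-1}((-1,0)) ∩ I_+` and `Δ_n^+ = T^{-1}(Δ_{n-1}^+) ∩ I_+`. -/
def DeltaPos (T : ℝ → ℝ) : ℕ → Set ℝ
  | 0 => T ⁻¹' (Set.Ioo (-1) 0) ∩ Set.Icc 0 1
  | (n+1) => T ⁻¹' (DeltaPos T n) ∩ Set.Icc 0 1

/-- `δ_n^- = T^{-1}(Δ_n^+) ∩ Δ_0^-`. -/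
def deltaNeg (T : ℝ → ℝ) (n : ℕ) : Set ℝ := T ⁻¹' (DeltaPos T n) ∩ DeltaNeg T 0

/-- `δ_n^+ = T^{-1}(Δ_n^-) ∩ Δ_0^+`. -/
def deltaPos (T : ℝ → ℝ) (n : ℕ) : Set ℝ := T ⁻¹' (DeltaNeg T n) ∩ DeltaPos T 0

/-- The class `𝔉` of doubly intermittent full branch maps of `I = [-1,1]`:
`T` agrees on `[-1,0)` and `(0,1]` with orientation-preserving `C²` diffeomorphic
branches `Tm : I_- → I`, `Tp : I_+ → I` whose only fixed points are `∓1` (A0), which have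
the prescribed local forms near `∓1` and `0∓` with exponents `ℓ₁, ℓ₂ ≥ 0`,
`k₁, k₂, a₁, a₂, b₁, b₂ > 0` (A1), which satisfy the uniform expansion property (A2), and
for which `β = max(k₁ℓ₁, k₂ℓ₂) < 1`. -/
structure DoublyIntermittent (T : ℝ → ℝ) where
  /-- the left branch `T_- : I_- → I` -/
  Tm : ℝ → ℝ
  /-- the right branch `T_+ : I_+ → I` -/
  Tp : ℝ → ℝ
  l₁ : ℝ
  l₂ : ℝ
  k₁ : ℝ
  k₂ : ℝ
  a₁ : ℝ
  a₂ : ℝ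
  b₁ : ℝ
  b₂ : ℝ
  /-- the radius `ι` of the one-sided neighbourhoods `U_{0±}` of `0` -/
  ι : ℝ
  hl₁ : 0 ≤ l₁
  hl₂ : 0 ≤ l₂
  hk₁ : 0 < k₁
  hk₂ : 0 < k₂
  ha₁ : 0 < a₁
  ha₂ : 0 < a₂
  hb₁ : 0 < b₁
  hb₂ : 0 < b₂
  hι : 0 < ι
  hι1 : ι ≤ 1
  /-- `T` agrees with the left branch on `[-1, 0)` -/
  hTm_eq : ∀ x ∈ Set.Ico (-1 : ℝ) 0, T x = Tm x
  /-- `T` agrees with the right branch on `(0, 1]` -/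
  hTp_eq : ∀ x ∈ Set.Ioc (0 : ℝ) 1, T x = Tp x
  hT0 : T 0 = Tm 0 ∨ T 0 = Tp 0
  /-- (A0): the branches are `C²` -/
  hTm_smooth : ContDiffOn ℝ 2 Tm (Set.Icc (-1) 0)
  hTp_smooth : ContDiffOn ℝ 2 Tp (Set.Icc 0 1)
  /-- (A0): orientation preserving -/
  hTm_mono : StrictMonoOn Tm (Set.Icc (-1) 0)
  hTp_mono : StrictMonoOn Tp (Set.Icc 0 1)
  /-- (A0): diffeomorphisms (nonvanishing one-sided derivatives) -/
  hTm_deriv : ∀ x ∈ Set.Icc (-1 : ℝ) 0, derivWithin Tm (Set.Icc (-1) 0) x ≠ 0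
  hTp_deriv : ∀ x ∈ Set.Icc (0 : ℝ) 1, derivWithin Tp (Set.Icc 0 1) x ≠ 0
  /-- (A0): full branches -/
  hTm_image : Tm '' Set.Icc (-1) 0 = Set.Icc (-1) 1
  hTp_image : Tp '' Set.Icc 0 1 = Set.Icc (-1) 1
  /-- (A0): the only fixed points are the endpoints -/
  hfixm : ∀ x ∈ Set.Icc (-1 : ℝ) 0, (Tm x = x ↔ x = -1)
  hfixp : ∀ x ∈ Set.Icc (0 : ℝ) 1, (Tp x = x ↔ x = 1)
  /-- (A1): form near `0-` (`T x = 1 - a₁|x|^{k₁}` on `U_{0-}`; if `k₁ = 1` only a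
  one-sided derivative `a₁ > 1` at `0` is required) -/
  hform0m : (k₁ ≠ 1 ∧ ∀ x ∈ Set.Ioc (-ι) 0, Tm x = 1 - a₁ * |x| ^ k₁)
      ∨ (k₁ = 1 ∧ 1 < a₁ ∧ HasDerivWithinAt Tm a₁ (Set.Icc (-1) 0) 0)
  /-- (A1): form near `0+` (`T x = -1 + a₂ x^{k₂}` on `U_{0+}`; if `k₂ = 1` only a
  one-sided derivative `a₂ > 1` at `0` is required) -/
  hform0p : (k₂ ≠ 1 ∧ ∀ x ∈ Set.Ico 0 ι, Tp x = -1 + a₂ * x ^ k₂)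
      ∨ (k₂ = 1 ∧ 1 < a₂ ∧ HasDerivWithinAt Tp a₂ (Set.Icc 0 1) 0)
  /-- (A1): form near `-1` on `U_{-1} = T(U_{0+})`
  (`T x = x + b₁ (1+x)^{1+ℓ₁}`; if `ℓ₁ = 0`, affine of slope `1 + b₁` up to a
  `C²` correction) -/
  hformm1 : (l₁ ≠ 0 ∧ ∀ x ∈ Tp '' Set.Ico 0 ι, Tm x = x + b₁ * (1 + x) ^ (1 + l₁))
      ∨ (l₁ = 0 ∧ ∃ ξ : ℝ → ℝ, ContDiff ℝ 2 ξ ∧ ξ (-1) = 0 ∧ deriv ξ (-1) = 0 ∧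
          ∀ x ∈ Tp '' Set.Ico 0 ι, Tm x = -1 + (1 + b₁) * (x + 1) + ξ x)
  /-- (A1): form near `1` on `U_1 = T(U_{0-})`
  (`T x = x - b₂ (1-x)^{1+ℓ₂}`; if `ℓ₂ = 0`, affine of slope `1 + b₂` up to a
  `C²` correction) -/
  hform1 : (l₂ ≠ 0 ∧ ∀ x ∈ Tm '' Set.Ioc (-ι) 0, Tp x = x - b₂ * (1 - x) ^ (1 + l₂))
      ∨ (l₂ = 0 ∧ ∃ ξ : ℝ → ℝ, ContDiff ℝ 2 ξ ∧ ξ 1 = 0 ∧ deriv ξ 1 = 0 ∧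
          ∀ x ∈ Tm '' Set.Ioc (-ι) 0, Tp x = 1 + (1 + b₂) * (x - 1) + ξ x)
  /-- (A2): uniform expansion `(T^n)'(x) > λ > 1` on `δ_n^±` for `1 ≤ n ≤ n_±` -/
  hA2 : ∃ Λ : ℝ, 1 < Λ ∧
      (∀ n : ℕ, 1 ≤ n → n ≤ sInf {m : ℕ | deltaNeg T m ⊆ Set.Ioc (-ι) 0} →
        ∀ x ∈ deltaNeg T n, Λ < deriv (T^[n]) x) ∧
      (∀ n : ℕ, 1 ≤ n → n ≤ sInf {m : ℕ | deltaPos T m ⊆ Set.Ico 0 ι} →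
        ∀ x ∈ deltaPos T n, Λ < deriv (T^[n]) x)
  /-- `β = max(k₁ℓ₁, k₂ℓ₂) < 1` -/
  hβ : max (k₁ * l₁) (k₂ * l₂) < 1

end

/-- Iterated preimage under the left branch within `I_- = [-1,0]`:
`T_-^{-k}(S) = (S ↦ T_-^{-1}(S) ∩ I_-)^k (S)`. -/
def TmInvIter (Tm : ℝ → ℝ) (k : ℕ) (S : Set ℝ) : Set ℝ :=
  (fun S => Tm ⁻¹' S ∩ Set.Icc (-1) 0)^[k] S

/-- `B'(k) = T_+^{-1}(T_-^{-(k-1)}(B))` (within `I_+ = [0,1]`). -/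
def shadowBranch (Tm Tp : ℝ → ℝ) (k : ℕ) (B : Set ℝ) : Set ℝ :=
  Tp ⁻¹' (TmInvIter Tm (k - 1) B) ∩ Set.Icc 0 1


open Function

lemma coe_lt_hitTime_iff {X : Type*} {T : X → X} {A : Set X} {x : X} {k : ℕ} :
    (k : ℕ∞) < hitTime T A x ↔ ∀ n, 1 ≤ n → n ≤ k → T^[n] x ∉ A := by
  rw [hitTime, hitInstant, hitInstant, ← ENat.add_one_le_iff (ENat.natCast_ne_top k), le_sInf_iff]
  constructor
  · intro h n hn hnk hnA
    have := h n ⟨n, by exact_mod_cast hn, hnA, rfl⟩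
    norm_cast at this
    omega
  · rintro h _ ⟨n, hn, hnA, rfl⟩
    by_contra hlt
    exact h n (by exact_mod_cast hn) (by norm_cast at hlt; omega) hnA

lemma ordConnected_preimage_inter_of_monotoneOn {α β : Type*} [Preorder α] [Preorder β]
    {f : β → α} {s : Set α} {t : Set β} (hs : s.OrdConnected) (ht : t.OrdConnected)
    (hf : MonotoneOn f t) : (f ⁻¹' s ∩ t).OrdConnected := by
  obtain ⟨u, hu, htu⟩ := hs.preimage_monotoneOn hf
  rw [inter_comm, htu]
  exact ht.inter hu

lemma MonotoneOn.apply_left_eq_of_image_Icc {α β : Type*} [Preorder α] [PartialOrder β]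
    {f : α → β} {a b : α} {c d : β} (hab : a ≤ b) (hf : MonotoneOn f (Icc a b))
    (himg : f '' Icc a b = Icc c d) : f a = c := by
  have hfa : f a ∈ Icc c d := himg ▸ mem_image_of_mem f (left_mem_Icc.2 hab)
  obtain ⟨x, hx, hxc⟩ : c ∈ f '' Icc a b := himg ▸ left_mem_Icc.2 (hfa.1.trans hfa.2)
  exact le_antisymm (hxc ▸ hf (left_mem_Icc.2 hab) hx hx.1) hfa.1

lemma MonotoneOn.apply_right_eq_of_image_Icc {α β : Type*} [Preorder α] [PartialOrder β]
    {f : α → β} {a b : α} {c d : β} (hab : a ≤ b) (hf : MonotoneOn f (Icc a b))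
    (himg : f '' Icc a b = Icc c d) : f b = d := by
  have hfb : f b ∈ Icc c d := himg ▸ mem_image_of_mem f (right_mem_Icc.2 hab)
  obtain ⟨x, hx, hxd⟩ : d ∈ f '' Icc a b := himg ▸ right_mem_Icc.2 (hfb.1.trans hfb.2)
  exact le_antisymm hfb.2 (hxd ▸ hf hx (right_mem_Icc.2 hab) hx.2)

lemma mem_Ioo_of_apply_mem_Ioo {α β : Type*} [PartialOrder α] [Preorder β] {f : α → β}
    {a b x : α} {c d : β} (hfa : f a = c) (hfb : f b = d) (hx : x ∈ Icc a b)
    (hfx : f x ∈ Ioo c d) : x ∈ Ioo a b :=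
  ⟨hx.1.lt_of_ne (by rintro rfl; exact hfx.1.ne' hfa),
    hx.2.lt_of_ne (by rintro rfl; exact hfx.2.ne hfb)⟩

lemma existsUnique_mem_of_bijOn_singleton {α β : Type*} {f : α → β} {s : Set α} {b : β}
    (h : BijOn f s {b}) : ∃! a, a ∈ s := by
  obtain ⟨a, ha, -⟩ := h.surjOn rfl
  exact ⟨a, ha, fun a' ha' => h.injOn ha' ha ((h.mapsTo ha').trans (h.mapsTo ha).symm)⟩

lemma tmInvIter_succ (Tm : ℝ → ℝ) (n : ℕ) (S : Set ℝ) :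
    TmInvIter Tm (n + 1) S = Tm ⁻¹' TmInvIter Tm n S ∩ Icc (-1) 0 :=
  iterate_succ_apply' _ n S

lemma ordConnected_tmInvIter {Tm : ℝ → ℝ} (hTm : MonotoneOn Tm (Icc (-1) 0))
    {S : Set ℝ} (hS : S.OrdConnected) (n : ℕ) : (TmInvIter Tm n S).OrdConnected := by
  induction n with
  | zero => exact hS
  | succ n ih =>
    rw [tmInvIter_succ]
    exact ordConnected_preimage_inter_of_monotoneOn ih ordConnected_Icc hTm

lemma ordConnected_shadowBranch {Tm Tp : ℝ → ℝ} (hTm : MonotoneOn Tm (Icc (-1) 0))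
    (hTp : MonotoneOn Tp (Icc 0 1)) {B : Set ℝ} (hB : B.OrdConnected) (k : ℕ) :
    (shadowBranch Tm Tp k B).OrdConnected :=
  ordConnected_preimage_inter_of_monotoneOn (ordConnected_tmInvIter hTm hB _)
    ordConnected_Icc hTp

namespace DoublyIntermittent

variable {T : ℝ → ℝ}

lemma Tm_neg_one (hT : DoublyIntermittent T) : hT.Tm (-1) = -1 :=
  hT.hTm_mono.monotoneOn.apply_left_eq_of_image_Icc (by norm_num) hT.hTm_image

lemma Tm_zero (hT : DoublyIntermittent T) : hT.Tm 0 = 1 :=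
  hT.hTm_mono.monotoneOn.apply_right_eq_of_image_Icc (by norm_num) hT.hTm_image

lemma Tp_zero (hT : DoublyIntermittent T) : hT.Tp 0 = -1 :=
  hT.hTp_mono.monotoneOn.apply_left_eq_of_image_Icc zero_le_one hT.hTp_image

lemma Tp_one (hT : DoublyIntermittent T) : hT.Tp 1 = 1 :=
  hT.hTp_mono.monotoneOn.apply_right_eq_of_image_Icc zero_le_one hT.hTp_image

lemma mem_Ioo_of_Tm_mem_Ioo (hT : DoublyIntermittent T) {x : ℝ} (hx : x ∈ Icc (-1) 0)
    (hTx : hT.Tm x ∈ Ioo (-1) 1) : x ∈ Ioo (-1) 0 :=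
  mem_Ioo_of_apply_mem_Ioo hT.Tm_neg_one hT.Tm_zero hx hTx

lemma mem_Ioo_of_Tp_mem_Ioo (hT : DoublyIntermittent T) {x : ℝ} (hx : x ∈ Icc 0 1)
    (hTx : hT.Tp x ∈ Ioo (-1) 1) : x ∈ Ioo 0 1 :=
  mem_Ioo_of_apply_mem_Ioo hT.Tp_zero hT.Tp_one hx hTx

lemma T_neg_one (hT : DoublyIntermittent T) : T (-1) = -1 := by
  rw [hT.hTm_eq (-1) ⟨le_rfl, by norm_num⟩, hT.Tm_neg_one]

lemma T_zero_notMem (hT : DoublyIntermittent T) : T 0 ∉ Ioo (-1) 0 := by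
  rcases hT.hT0 with h | h <;> simp [h, hT.Tm_zero, hT.Tp_zero]

lemma mapsTo_Icc (hT : DoublyIntermittent T) : MapsTo T (Icc (-1) 1) (Icc (-1) 1) := by
  intro x hx
  rcases lt_or_ge x 0 with hx0 | hx0
  · rw [hT.hTm_eq x ⟨hx.1, hx0⟩, ← hT.hTm_image]
    exact mem_image_of_mem _ ⟨hx.1, hx0.le⟩
  · rcases hx0.eq_or_lt with rfl | hx0
    · rcases hT.hT0 with h | h <;> simp [h, hT.Tm_zero, hT.Tp_zero]
    · rw [hT.hTp_eq x ⟨hx0, hx.2⟩, ← hT.hTp_image]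
      exact mem_image_of_mem _ ⟨hx0.le, hx.2⟩

lemma strictMonoOn_Ico (hT : DoublyIntermittent T) : StrictMonoOn T (Ico (-1) 0) :=
  (hT.hTm_mono.mono Ico_subset_Icc_self).congr fun x hx => (hT.hTm_eq x hx).symm

lemma strictMonoOn_Ioc (hT : DoublyIntermittent T) : StrictMonoOn T (Ioc 0 1) :=
  (hT.hTp_mono.mono Ioc_subset_Icc_self).congr fun x hx => (hT.hTp_eq x hx).symm

lemma exists_mem_Ioo_neg_T_eq (hT : DoublyIntermittent T) {y : ℝ} (hy : y ∈ Ioo (-1) 1) :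
    ∃ x ∈ Ioo (-1) 0, T x = y := by
  obtain ⟨x, hx, rfl⟩ : y ∈ hT.Tm '' Icc (-1) 0 := hT.hTm_image ▸ Ioo_subset_Icc_self hy
  have hx' := hT.mem_Ioo_of_Tm_mem_Ioo hx hy
  exact ⟨x, hx', hT.hTm_eq x ⟨hx'.1.le, hx'.2⟩⟩

lemma exists_mem_Ioo_pos_T_eq (hT : DoublyIntermittent T) {y : ℝ} (hy : y ∈ Ioo (-1) 1) :
    ∃ x ∈ Ioo 0 1, T x = y := by
  obtain ⟨x, hx, rfl⟩ : y ∈ hT.Tp '' Icc 0 1 := hT.hTp_image ▸ Ioo_subset_Icc_self hy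
  have hx' := hT.mem_Ioo_of_Tp_mem_Ioo hx hy
  exact ⟨x, hx', hT.hTp_eq x ⟨hx'.1, hx'.2.le⟩⟩

lemma lt_Tm (hT : DoublyIntermittent T) {x : ℝ} (hx : x ∈ Ioc (-1) 0) : x < hT.Tm x := by
  by_contra! hle
  -- otherwise `Tm - id` vanishes somewhere on `[x, 0]`, giving a fixed point other than `-1`
  have hcont : ContinuousOn (fun y => hT.Tm y - y) (Icc x 0) :=
    (hT.hTm_smooth.continuousOn.mono (Icc_subset_Icc hx.1.le le_rfl)).sub continuousOn_id
  obtain ⟨c, hc, hfix⟩ := intermediate_value_Icc hx.2 hcont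
    ⟨sub_nonpos.2 hle, by simp [hT.Tm_zero]⟩
  have hc_fix : hT.Tm c = c := sub_eq_zero.1 hfix
  have := (hT.hfixm c ⟨hx.1.le.trans hc.1, hc.2⟩).1 hc_fix
  linarith [hx.1, hc.1]

lemma lt_T (hT : DoublyIntermittent T) {x : ℝ} (hx : x ∈ Ioo (-1) 0) : x < T x :=
  hT.hTm_eq x ⟨hx.1.le, hx.2⟩ ▸ hT.lt_Tm ⟨hx.1, hx.2.le⟩

lemma deltaPos_zero_subset_Ioc (hT : DoublyIntermittent T) : DeltaPos T 0 ⊆ Ioc 0 1 := by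
  rintro x ⟨hTx, hx⟩
  refine ⟨hx.1.lt_of_ne ?_, hx.2⟩
  rintro rfl
  exact hT.T_zero_notMem hTx

lemma mem_Ioo_of_T_mem_Ioo (hT : DoublyIntermittent T) {y : ℝ} (hy : y ∈ Icc (-1) 1)
    (hyA : y ∉ DeltaPos T 0) (hTy : T y ∈ Ioo (-1) 0) : y ∈ Ioo (-1) 0 := by
  rcases lt_or_ge y 0 with hy0 | hy0
  · refine ⟨hy.1.lt_of_ne ?_, hy0⟩
    rintro rfl
    exact hTy.1.ne' hT.T_neg_one
  · exact absurd ⟨hTy, hy0, hy.2⟩ hyA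

lemma iterate_mem_Ioo_of_forall_notMem (hT : DoublyIntermittent T) {x : ℝ}
    (hx : x ∈ Icc (-1) 1) {k : ℕ} (hA : ∀ j, 1 ≤ j → j ≤ k → T^[j] x ∉ DeltaPos T 0)
    (hk : T^[k] x ∈ Ioo (-1) 0) : ∀ j, 1 ≤ j → j ≤ k → T^[j] x ∈ Ioo (-1) 0 := by
  intro j hj hjk
  induction hjk using Nat.decreasingInduction with
  | self => exact hk
  | of_succ j hjk ih =>
    refine hT.mem_Ioo_of_T_mem_Ioo (hT.mapsTo_Icc.iterate j hx) (hA j hj hjk.le) ?_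
    rw [← iterate_succ_apply' T j x]
    exact ih (by omega)

lemma mem_tmInvIter_iff (hT : DoublyIntermittent T) {S : Set ℝ} (hS : S ⊆ Ioo (-1) 0)
    {n : ℕ} {y : ℝ} :
    y ∈ TmInvIter hT.Tm n S ↔ (∀ j ≤ n, T^[j] y ∈ Ioo (-1) 0) ∧ T^[n] y ∈ S := by
  induction n generalizing y with
  | zero => exact ⟨fun hy => ⟨fun j hj => by simpa [Nat.le_zero.1 hj] using hS hy, hy⟩, And.right⟩
  | succ n ih =>
    rw [tmInvIter_succ, mem_inter_iff, mem_preimage, ih]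
    constructor
    · rintro ⟨⟨horb, hn⟩, hy⟩
      have hy' := hT.mem_Ioo_of_Tm_mem_Ioo hy (Ioo_subset_Ioo_right zero_le_one (horb 0 n.zero_le))
      have hTy : T y = hT.Tm y := hT.hTm_eq y ⟨hy'.1.le, hy'.2⟩
      refine ⟨fun j hj => ?_, by rwa [iterate_succ_apply, hTy]⟩
      cases j with
      | zero => exact hy'
      | succ i => rw [iterate_succ_apply, hTy]; exact horb i (by omega)
    · rintro ⟨horb, hn⟩
      have hy := horb 0 (Nat.zero_le _)
      have hTy : T y = hT.Tm y := hT.hTm_eq y ⟨hy.1.le, hy.2⟩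
      rw [iterate_succ_apply, hTy] at hn
      refine ⟨⟨fun i hi => ?_, hn⟩, Ioo_subset_Icc_self hy⟩
      simpa only [iterate_succ_apply, hTy] using horb (i + 1) (by omega)

lemma mem_shadowBranch_iff (hT : DoublyIntermittent T) {B : Set ℝ} (hB : B ⊆ Ioo (-1) 0)
    {k : ℕ} (hk : 1 ≤ k) {x : ℝ} :
    x ∈ shadowBranch hT.Tm hT.Tp k B ↔
      x ∈ Ioc 0 1 ∧ (∀ j, 1 ≤ j → j ≤ k → T^[j] x ∈ Ioo (-1) 0) ∧ T^[k] x ∈ B := by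
  obtain ⟨n, rfl⟩ := Nat.exists_eq_add_of_le' hk
  rw [shadowBranch, mem_inter_iff, mem_preimage, Nat.add_sub_cancel, hT.mem_tmInvIter_iff hB]
  constructor
  · rintro ⟨⟨horb, hn⟩, hx⟩
    have hx' := hT.mem_Ioo_of_Tp_mem_Ioo hx (Ioo_subset_Ioo_right zero_le_one (horb 0 n.zero_le))
    have hTx : T x = hT.Tp x := hT.hTp_eq x ⟨hx'.1, hx'.2.le⟩
    refine ⟨Ioo_subset_Ioc_self hx', fun j hj hjk => ?_, by rwa [iterate_succ_apply, hTx]⟩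
    obtain ⟨i, rfl⟩ := Nat.exists_eq_add_of_le' hj
    rw [iterate_succ_apply, hTx]
    exact horb i (by omega)
  · rintro ⟨hx, horb, hn⟩
    have hTx : T x = hT.Tp x := hT.hTp_eq x hx
    rw [iterate_succ_apply, hTx] at hn
    refine ⟨⟨fun i hi => ?_, hn⟩, Ioc_subset_Icc_self hx⟩
    simpa only [iterate_succ_apply, hTx] using horb (i + 1) (by omega) (by omega)

lemma mem_shadowBranch_iff_firstEntry (hT : DoublyIntermittent T) {B : Set ℝ}
    (hB : B ⊆ Ioo (-1) 0) {k : ℕ} (hk : 1 ≤ k) {x : ℝ} :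
    x ∈ shadowBranch hT.Tm hT.Tp k B ↔
      x ∈ DeltaPos T 0 ∧ (∀ j, 1 ≤ j → j ≤ k → T^[j] x ∉ DeltaPos T 0) ∧ T^[k] x ∈ B := by
  rw [hT.mem_shadowBranch_iff hB hk]
  constructor
  · rintro ⟨hx, horb, hkB⟩
    exact ⟨⟨horb 1 le_rfl hk, Ioc_subset_Icc_self hx⟩,
      fun j hj hjk hjA => (horb j hj hjk).2.not_ge hjA.2.1, hkB⟩
  · rintro ⟨hA, hnotA, hkB⟩
    exact ⟨hT.deltaPos_zero_subset_Ioc hA,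
      hT.iterate_mem_Ioo_of_forall_notMem (Icc_subset_Icc (by norm_num) le_rfl hA.2) hnotA
        (hB hkB), hkB⟩

lemma firstEntry_eq_shadowBranch (hT : DoublyIntermittent T) {B : Set ℝ}
    (hB : B ⊆ Ioo (-1) 0) {k : ℕ} (hk : 1 ≤ k) :
    DeltaPos T 0 ∩ {x | (k : ℕ∞) < hitTime T (DeltaPos T 0) x} ∩ (T^[k]) ⁻¹' B
      = shadowBranch hT.Tm hT.Tp k B := by
  ext x
  rw [hT.mem_shadowBranch_iff_firstEntry hB hk, mem_inter_iff, mem_inter_iff, mem_ofPred_eq,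
    coe_lt_hitTime_iff, mem_preimage, and_assoc]

lemma strictMonoOn_iterate_shadowBranch (hT : DoublyIntermittent T) {B : Set ℝ}
    (hB : B ⊆ Ioo (-1) 0) {k : ℕ} (hk : 1 ≤ k) :
    StrictMonoOn (T^[k]) (shadowBranch hT.Tm hT.Tp k B) := by
  intro x hx y hy hxy
  obtain ⟨hx, hxorb, -⟩ := (hT.mem_shadowBranch_iff hB hk).1 hx
  obtain ⟨hy, hyorb, -⟩ := (hT.mem_shadowBranch_iff hB hk).1 hy
  have hlt : ∀ j, 1 ≤ j → j ≤ k → T^[j] x < T^[j] y := by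
    intro j hj
    induction j, hj using Nat.le_induction with
    | base => exact fun _ => hT.strictMonoOn_Ioc hx hy hxy
    | succ j hj ih =>
      intro hjk
      rw [iterate_succ_apply', iterate_succ_apply']
      exact hT.strictMonoOn_Ico (Ioo_subset_Ico_self (hxorb j hj (by omega)))
        (Ioo_subset_Ico_self (hyorb j hj (by omega))) (ih (by omega))
  exact hlt k hk le_rfl

lemma exists_forall_iterate_mem_Ioo_eq (hT : DoublyIntermittent T) (n : ℕ) {b : ℝ}
    (hb : b ∈ Ioo (-1) 0) : ∃ y, (∀ j ≤ n, T^[j] y ∈ Ioo (-1) 0) ∧ T^[n] y = b := by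
  induction n with
  | zero => exact ⟨b, fun j hj => by simpa [Nat.le_zero.1 hj] using hb, rfl⟩
  | succ n ih =>
    obtain ⟨y, horb, hyb⟩ := ih
    have hy : y ∈ Ioo (-1) 0 := horb 0 n.zero_le
    obtain ⟨z, hz, hzy⟩ := hT.exists_mem_Ioo_neg_T_eq (Ioo_subset_Ioo_right zero_le_one hy)
    refine ⟨z, fun j hj => ?_, by rw [iterate_succ_apply, hzy, hyb]⟩
    cases j with
    | zero => exact hz
    | succ i => rw [iterate_succ_apply, hzy]; exact horb i (by omega)

lemma bijOn_iterate_shadowBranch (hT : DoublyIntermittent T) {B : Set ℝ}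
    (hB : B ⊆ Ioo (-1) 0) {k : ℕ} (hk : 1 ≤ k) :
    BijOn (T^[k]) (shadowBranch hT.Tm hT.Tp k B) B := by
  refine ⟨fun x hx => ((hT.mem_shadowBranch_iff hB hk).1 hx).2.2,
    (hT.strictMonoOn_iterate_shadowBranch hB hk).injOn, fun b hb => ?_⟩
  obtain ⟨n, rfl⟩ := Nat.exists_eq_add_of_le' hk
  obtain ⟨y, horb, hyb⟩ := hT.exists_forall_iterate_mem_Ioo_eq n (hB hb)
  have hy : y ∈ Ioo (-1) 0 := horb 0 n.zero_le
  obtain ⟨x, hx, hxy⟩ := hT.exists_mem_Ioo_pos_T_eq (Ioo_subset_Ioo_right zero_le_one hy)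
  have hTx : T x = hT.Tp x := hT.hTp_eq x ⟨hx.1, hx.2.le⟩
  refine ⟨x, ⟨?_, Ioo_subset_Icc_self hx⟩, by rw [iterate_succ_apply, hxy, hyb]⟩
  rw [mem_preimage, Nat.add_sub_cancel, ← hTx, hxy, hT.mem_tmInvIter_iff hB]
  exact ⟨horb, hyb ▸ hb⟩

lemma disjoint_shadowBranch (hT : DoublyIntermittent T) {B : Set ℝ} (hBint : B.OrdConnected)
    (hB : B ⊆ Ioo (-1) 0) (hBdisj : Disjoint (T '' B) B) {k k' : ℕ} (hk : 1 ≤ k)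
    (hkk' : k < k') :
    Disjoint (shadowBranch hT.Tm hT.Tp k B) (shadowBranch hT.Tm hT.Tp k' B) := by
  refine disjoint_left.2 fun x hx hx' => ?_
  obtain ⟨-, -, hkB⟩ := (hT.mem_shadowBranch_iff hB hk).1 hx
  obtain ⟨-, horb, hk'B⟩ := (hT.mem_shadowBranch_iff hB (hk.trans hkk'.le)).1 hx'
  have hmono : ∀ j, k + 1 ≤ j → j ≤ k' → T^[k + 1] x ≤ T^[j] x := by
    intro j hj
    induction j, hj using Nat.le_induction with
    | base => exact fun _ => le_rfl
    | succ j hj ih =>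
      intro hjk
      rw [iterate_succ_apply' T j]
      exact (ih (by omega)).trans (hT.lt_T (horb j (by omega) (by omega))).le
  have himg : T^[k + 1] x ∈ T '' B := by
    rw [iterate_succ_apply']
    exact mem_image_of_mem T hkB
  have hstep : T^[k] x < T^[k + 1] x := by
    rw [iterate_succ_apply']
    exact hT.lt_T (hB hkB)
  exact disjoint_left.1 hBdisj himg (hBint.out hkB hk'B ⟨hstep.le, hmono k' hkk' le_rfl⟩)

lemma shadow_eq_iUnion_shadowBranch (hT : DoublyIntermittent T) {B : Set ℝ}
    (hB : B ⊆ Ioo (-1) 0) :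
    shadow T (DeltaPos T 0) B = ⋃ k : ℕ, shadowBranch hT.Tm hT.Tp (k + 1) B := by
  have hempty : DeltaPos T 0 ∩ {x | ((0 : ℕ) : ℕ∞) < hitTime T (DeltaPos T 0) x} ∩
      (T^[0]) ⁻¹' B = ∅ :=
    eq_empty_of_forall_notMem fun x ⟨⟨hA, _⟩, hxB⟩ => (hB hxB).2.not_ge hA.2.1
  rw [shadow, ← union_iUnion_nat_succ, hempty, empty_union]
  exact iUnion_congr fun k => hT.firstEntry_eq_shadowBranch hB k.succ_pos

lemma exists_mem_shadowBranch_T_eq_T_T (hT : DoublyIntermittent T) {B : Set ℝ}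
    (hB : B ⊆ Ioo (-1) 0) {k : ℕ} (hk : 1 ≤ k) {x : ℝ}
    (hx : x ∈ shadowBranch hT.Tm hT.Tp (k + 1) B) :
    ∃ y ∈ shadowBranch hT.Tm hT.Tp k B, T y = T (T x) := by
  obtain ⟨-, horb, hkB⟩ := (hT.mem_shadowBranch_iff hB (by omega)).1 hx
  have hTTx : T (T x) ∈ Ioo (-1) 0 := horb 2 (by omega) (by omega)
  obtain ⟨y, hy, hyx⟩ := hT.exists_mem_Ioo_pos_T_eq (Ioo_subset_Ioo_right zero_le_one hTTx)
  have hiter : ∀ i, T^[i + 1] y = T^[i + 2] x := fun i => by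
    rw [iterate_succ_apply, hyx]
    rfl
  refine ⟨y, (hT.mem_shadowBranch_iff hB hk).2
    ⟨Ioo_subset_Ioc_self hy, fun j hj hjk => ?_, ?_⟩, hyx⟩
  · obtain ⟨i, rfl⟩ := Nat.exists_eq_add_of_le' hj
    rw [hiter]
    exact horb (i + 2) (by omega) (by omega)
  · obtain ⟨i, rfl⟩ := Nat.exists_eq_add_of_le' hk
    rw [hiter]
    exact hkB

lemma T_T_succ_eq (hT : DoublyIntermittent T) {ζ : ℝ} (hζ : ζ ∈ Ioo (-1) 0) {α : ℕ → ℝ}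
    (hα : ∀ k, 1 ≤ k → α k ∈ shadowBranch hT.Tm hT.Tp k {ζ}) {k : ℕ} (hk : 1 ≤ k) :
    T (T (α (k + 1))) = T (α k) := by
  have hζ' : {ζ} ⊆ Ioo (-1 : ℝ) 0 := singleton_subset_iff.2 hζ
  obtain ⟨y, hy, hyT⟩ := hT.exists_mem_shadowBranch_T_eq_T_T hζ' hk (hα (k + 1) (by omega))
  rw [← hyT, (existsUnique_mem_of_bijOn_singleton
    (hT.bijOn_iterate_shadowBranch hζ' hk)).unique hy (hα k hk)]

lemma strictAntiOn_of_mem_shadowBranch (hT : DoublyIntermittent T) {ζ : ℝ}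
    (hζ : ζ ∈ Ioo (-1) 0) {α : ℕ → ℝ}
    (hα : ∀ k, 1 ≤ k → α k ∈ shadowBranch hT.Tm hT.Tp k {ζ}) : StrictAntiOn α (Ici 1) := by
  have hζ' : {ζ} ⊆ Ioo (-1 : ℝ) 0 := singleton_subset_iff.2 hζ
  refine strictAntiOn_of_succ_lt ordConnected_Ici fun k _ hk _ => ?_
  obtain ⟨hx, horb, -⟩ := (hT.mem_shadowBranch_iff hζ' (by omega)).1 (hα (k + 1) (by omega))
  obtain ⟨hy, -, -⟩ := (hT.mem_shadowBranch_iff hζ' hk).1 (hα k hk)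
  refine (hT.strictMonoOn_Ioc.lt_iff_lt hx hy).1 ?_
  rw [← hT.T_T_succ_eq hζ hα hk]
  exact hT.lt_T (horb 1 le_rfl (by omega))

lemma tendsto_zero_of_mem_shadowBranch (hT : DoublyIntermittent T) {ζ : ℝ}
    (hζ : ζ ∈ Ioo (-1) 0) {α : ℕ → ℝ}
    (hα : ∀ k, 1 ≤ k → α k ∈ shadowBranch hT.Tm hT.Tp k {ζ}) : Tendsto α atTop (𝓝 0) := by
  have hζ' : {ζ} ⊆ Ioo (-1 : ℝ) 0 := singleton_subset_iff.2 hζ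
  have hu : ∀ n, α (n + 1) ∈ Ioc 0 1 ∧ T (α (n + 1)) ∈ Ioo (-1) 0 := fun n => by
    obtain ⟨hx, horb, -⟩ := (hT.mem_shadowBranch_iff hζ' (by omega)).1 (hα (n + 1) (by omega))
    exact ⟨hx, horb 1 le_rfl (by omega)⟩
  have hanti : Antitone fun n => α (n + 1) := antitone_nat_of_succ_le fun n =>
    (hT.strictAntiOn_of_mem_shadowBranch hζ hα (by simp) (by simp) (by omega)).le
  have hL := tendsto_atTop_ciInf hanti ⟨0, by rintro _ ⟨n, rfl⟩; exact (hu n).1.1.le⟩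
  set L := ⨅ n, α (n + 1)
  have hLI : L ∈ Icc 0 1 :=
    isClosed_Icc.mem_of_tendsto hL (Eventually.of_forall fun n => Ioc_subset_Icc_self (hu n).1)
  have hv : Tendsto (fun n => T (α (n + 1))) atTop (𝓝 (hT.Tp L)) := by
    refine ((hT.hTp_smooth.continuousOn L hLI).tendsto.comp (tendsto_nhdsWithin_iff.2
      ⟨hL, Eventually.of_forall fun n => Ioc_subset_Icc_self (hu n).1⟩)).congr fun n => ?_
    exact (hT.hTp_eq _ (hu n).1).symm
  have hMI : hT.Tp L ∈ Icc (-1) 0 :=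
    isClosed_Icc.mem_of_tendsto hv (Eventually.of_forall fun n => Ioo_subset_Icc_self (hu n).2)
  have hTm : Tendsto (fun n => T (α (n + 1))) atTop (𝓝 (hT.Tm (hT.Tp L))) := by
    refine ((hT.hTm_smooth.continuousOn _ hMI).tendsto.comp (tendsto_nhdsWithin_iff.2
      ⟨hv.comp (tendsto_add_atTop_nat 1),
        Eventually.of_forall fun n => Ioo_subset_Icc_self (hu (n + 1)).2⟩)).congr fun n => ?_
    have hv' := (hu (n + 1)).2
    simp only [comp_apply]
    rw [← hT.hTm_eq _ ⟨hv'.1.le, hv'.2⟩, hT.T_T_succ_eq hζ hα (by omega)]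
  have hfix : hT.Tp L = -1 := (hT.hfixm _ hMI).1 (tendsto_nhds_unique hTm hv)
  have hL0 : L = 0 := hT.hTp_mono.injOn hLI ⟨le_rfl, zero_le_one⟩ (hfix.trans hT.Tp_zero.symm)
  exact (tendsto_add_atTop_iff_nat 1).1 (hL0 ▸ hL)

end DoublyIntermittent

/-- For a doubly intermittent map `T ∈ 𝔉`, `A = Δ₀^+`, and an interval
`B` with closure contained in `(-1,0)` and `T(B) ∩ B = ∅`: for every `k ≥ 1`,
`A ∩ {r_A > k} ∩ T^{-k}(B) = B'(k) = T_+^{-1}(T_-^{-(k-1)}(B))`; the `B'(k)` are pairwise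
disjoint intervals contained in `A`; `T^k` maps `B'(k)` bijectively onto `B`; the shadow
of `B` in `A` is `⋃_{k ≥ 1} B'(k)`.  Moreover, for `ζ ∈ (-1,0)`, the points
`α_k = T_+^{-1}(T_-^{-(k-1)}(ζ))` form a strictly decreasing sequence converging to `0`,
`α_k` being the unique point `α ∈ A` with `T^k(α) = ζ` and `T^j(α) ∉ A` for
`1 ≤ j ≤ k`. -/
theorem statement18 (T : ℝ → ℝ) (hT : DoublyIntermittent T)
    (B : Set ℝ) (hBint : B.OrdConnected) (hBsub : closure B ⊆ Set.Ioo (-1 : ℝ) 0)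
    (hBdisj : Disjoint (T '' B) B) :
    (∀ k : ℕ, 1 ≤ k →
      DeltaPos T 0 ∩ {x | (k : ℕ∞) < hitTime T (DeltaPos T 0) x} ∩ (T^[k]) ⁻¹' B
        = shadowBranch hT.Tm hT.Tp k B) ∧
    (∀ k k' : ℕ, 1 ≤ k → 1 ≤ k' → k ≠ k' →
      Disjoint (shadowBranch hT.Tm hT.Tp k B) (shadowBranch hT.Tm hT.Tp k' B)) ∧
    (∀ k : ℕ, 1 ≤ k → (shadowBranch hT.Tm hT.Tp k B).OrdConnected ∧
      shadowBranch hT.Tm hT.Tp k B ⊆ DeltaPos T 0) ∧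
    (∀ k : ℕ, 1 ≤ k → Set.BijOn (T^[k]) (shadowBranch hT.Tm hT.Tp k B) B) ∧
    (shadow T (DeltaPos T 0) B = ⋃ k : ℕ, shadowBranch hT.Tm hT.Tp (k + 1) B) ∧
    (∀ ζ ∈ Set.Ioo (-1 : ℝ) 0, ∀ k : ℕ, 1 ≤ k →
      ({α | α ∈ DeltaPos T 0 ∧ T^[k] α = ζ ∧
          ∀ j, 1 ≤ j → j ≤ k → T^[j] α ∉ DeltaPos T 0}
        = shadowBranch hT.Tm hT.Tp k {ζ}) ∧
      (∃! α : ℝ, α ∈ DeltaPos T 0 ∧ T^[k] α = ζ ∧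
          ∀ j, 1 ≤ j → j ≤ k → T^[j] α ∉ DeltaPos T 0)) ∧
    (∀ ζ ∈ Set.Ioo (-1 : ℝ) 0, ∀ α : ℕ → ℝ,
      (∀ k : ℕ, 1 ≤ k → α k ∈ DeltaPos T 0 ∧ T^[k] (α k) = ζ ∧
          ∀ j, 1 ≤ j → j ≤ k → T^[j] (α k) ∉ DeltaPos T 0) →
      StrictAntiOn α (Set.Ici 1) ∧ Tendsto α atTop (𝓝 0)) := by
  have hB : B ⊆ Ioo (-1) 0 := subset_closure.trans hBsub
  have hpoint : ∀ ζ ∈ Ioo (-1 : ℝ) 0, ∀ k, 1 ≤ k → ∀ α,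
      (α ∈ DeltaPos T 0 ∧ T^[k] α = ζ ∧ ∀ j, 1 ≤ j → j ≤ k → T^[j] α ∉ DeltaPos T 0) ↔
        α ∈ shadowBranch hT.Tm hT.Tp k {ζ} := fun ζ hζ k hk α => by
    rw [hT.mem_shadowBranch_iff_firstEntry (singleton_subset_iff.2 hζ) hk, mem_singleton_iff]
    tauto
  refine ⟨fun k hk => hT.firstEntry_eq_shadowBranch hB hk, fun k k' hk hk' hne => ?_,
    fun k hk => ⟨ordConnected_shadowBranch hT.hTm_mono.monotoneOn hT.hTp_mono.monotoneOn hBint k,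
      fun x hx => ((hT.mem_shadowBranch_iff_firstEntry hB hk).1 hx).1⟩,
    fun k hk => hT.bijOn_iterate_shadowBranch hB hk, hT.shadow_eq_iUnion_shadowBranch hB,
    fun ζ hζ k hk => ⟨ext (hpoint ζ hζ k hk), (existsUnique_congr (hpoint ζ hζ k hk)).2
      (existsUnique_mem_of_bijOn_singleton
        (hT.bijOn_iterate_shadowBranch (singleton_subset_iff.2 hζ) hk))⟩,
    fun ζ hζ α hα => ?_⟩
  · rcases hne.lt_or_gt with h | h
    · exact hT.disjoint_shadowBranch hBint hB hBdisj hk h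
    · exact (hT.disjoint_shadowBranch hBint hB hBdisj hk' h).symm
  · have hα' := fun k hk => (hpoint ζ hζ k hk (α k)).1 (hα k hk)
    exact ⟨hT.strictAntiOn_of_mem_shadowBranch hζ hα', hT.tendsto_zero_of_mem_shadowBranch hζ hα'⟩
end
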